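/- arXiv:2504.11161 — 8 statements merged into one kernel-verified Lean document; each statement's English description precedes it below -/
import Mathlib

section
/- Let X and Y be real normed spaces and T : X → Y a bounded linear operator. Suppose T preserves Birkhoff-James orthogonality at a point x ∈ X, i.e., for all v ∈ X, if ‖x + λv‖ ≥ ‖x‖ for all real λ, then ‖Tx + λTv‖ ≥ ‖Tx‖ for all real λ. If Tx is a smooth point of Y (the set of norm-one supporting functionals at Tx is a singleton), then x is a smooth point of X. -/
/-!
If `f ∈ J(u)` and `f v = 0` then `u ⊥_B v`; conversely (James), if `u ⊥_B v` then `‖u‖` is the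
norm of `u` in `X ⧸ ℝ ∙ v`, and Hahn–Banach there yields `f ∈ J(u)` with `f v = 0`.
Now let `f ∈ J(x)`. For every `v`, `x ⊥_B w` with `w = v - (f v / ‖x‖) • x`, so `T x ⊥_B T w`, and
the unique `g ∈ J(T x)` vanishes at `T w`. This pins `f` down as `(‖x‖ / ‖T x‖) • g ∘ T`.
-/

open Metric Filter Set

/-- Birkhoff-James orthogonality. -/
def BJOrth {X : Type*} [NormedAddCommGroup X] [NormedSpace ℝ X] (u v : X) : Prop :=
  ∀ lam : ℝ, ‖u‖ ≤ ‖u + lam • v‖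

/-- Set of norm-one supporting functionals at a point. -/
def SuppFunc {X : Type*} [NormedAddCommGroup X] [NormedSpace ℝ X] (x : X) :
    Set (StrongDual ℝ X) := {f | ‖f‖ = 1 ∧ f x = ‖x‖}

/-- A nonzero point is smooth if it has a unique norm-one supporting functional. -/
def SmoothPt {X : Type*} [NormedAddCommGroup X] [NormedSpace ℝ X] (x : X) : Prop :=
  x ≠ 0 ∧ ∃! f : StrongDual ℝ X, f ∈ SuppFunc x

/-- `T` preserves Birkhoff-James orthogonality at `x`. -/
def PreservesBJAt {X Y : Type*} [NormedAddCommGroup X] [NormedSpace ℝ X]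
    [NormedAddCommGroup Y] [NormedSpace ℝ Y] (T : X →L[ℝ] Y) (x : X) : Prop :=
  ∀ v : X, BJOrth x v → BJOrth (T x) (T v)

section

variable {X : Type*} [NormedAddCommGroup X] [NormedSpace ℝ X]

lemma BJOrth.norm_quotient_mk {u v : X} (h : BJOrth u v) :
    ‖(Submodule.Quotient.mk u : X ⧸ ℝ ∙ v)‖ = ‖u‖ := by
  refine le_antisymm (Submodule.Quotient.norm_mk_le _ u) (QuotientAddGroup.le_norm_iff.2 ?_)
  intro m hm
  obtain ⟨c, hc⟩ := Submodule.mem_span_singleton.1 ((Submodule.Quotient.eq _).1 hm)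
  rw [sub_eq_iff_eq_add'.1 hc.symm]
  exact h c

lemma BJOrth.exists_mem_suppFunc_apply_eq_zero {u v : X} (hu : u ≠ 0) (h : BJOrth u v) :
    ∃ f ∈ SuppFunc u, f v = 0 := by
  have hq := h.norm_quotient_mk
  obtain ⟨φ, hφ, hφu⟩ := exists_dual_vector ℝ (Submodule.Quotient.mk u : X ⧸ ℝ ∙ v)
    (by rwa [hq, norm_ne_zero_iff])
  set f := φ ∘L (ℝ ∙ v).mkQL
  have hfu : f u = ‖u‖ := by simpa [f, hq] using hφu
  have hf_le : ‖f‖ ≤ 1 := by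
    refine f.opNorm_le_bound zero_le_one fun y ↦ ?_
    calc ‖f y‖ ≤ ‖φ‖ * ‖(Submodule.Quotient.mk y : X ⧸ ℝ ∙ v)‖ := φ.le_opNorm _
      _ ≤ 1 * ‖y‖ := by rw [hφ]; gcongr; exact Submodule.Quotient.norm_mk_le _ y
  have hf_ge : 1 ≤ ‖f‖ := by
    have := f.le_opNorm u
    rw [hfu, Real.norm_of_nonneg (norm_nonneg u)] at this
    exact one_le_of_le_mul_right₀ (norm_pos_iff.2 hu) this
  refine ⟨f, ⟨le_antisymm hf_le hf_ge, hfu⟩, ?_⟩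
  simp [f, (Submodule.Quotient.mk_eq_zero _).2 (Submodule.mem_span_singleton_self v)]

lemma bjOrth_of_mem_suppFunc {u v : X} {f : StrongDual ℝ X} (hf : f ∈ SuppFunc u) (hfv : f v = 0) :
    BJOrth u v := fun c ↦
  calc ‖u‖ = f (u + c • v) := by simp [hfv, hf.2]
    _ ≤ ‖f‖ * ‖u + c • v‖ := (le_abs_self _).trans (f.le_opNorm _)
    _ = ‖u + c • v‖ := by rw [hf.1, one_mul]

lemma suppFunc_nonempty {u : X} (hu : u ≠ 0) : (SuppFunc u).Nonempty :=
  exists_dual_vector ℝ u (norm_ne_zero_iff.2 hu)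

variable {Y : Type*} [NormedAddCommGroup Y] [NormedSpace ℝ Y]

lemma PreservesBJAt.eq_smul_comp_of_mem_suppFunc {T : X →L[ℝ] Y} {x : X} (hT : PreservesBJAt T x)
    (hTx : T x ≠ 0) {g : StrongDual ℝ Y} (hg : g ∈ SuppFunc (T x))
    (hg_unique : ∀ h ∈ SuppFunc (T x), h = g) {f : StrongDual ℝ X} (hf : f ∈ SuppFunc x) :
    f = (‖x‖ / ‖T x‖) • g ∘L T := by
  have hx : x ≠ 0 := ne_zero_of_map hTx
  ext v
  set w := v - (f v / ‖x‖) • x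
  have hfw : f w = 0 := by simp [w, hf.2, hx]
  obtain ⟨h, hh, hhw⟩ := (hT w (bjOrth_of_mem_suppFunc hf hfw)).exists_mem_suppFunc_apply_eq_zero hTx
  rw [hg_unique h hh] at hhw
  have : g (T v) = f v / ‖x‖ * ‖T x‖ := by simpa [w, hg.2, sub_eq_zero] using hhw
  change f v = ‖x‖ / ‖T x‖ * g (T v)
  rw [this]
  field_simp

end

theorem stmt_0 {X Y : Type*} [NormedAddCommGroup X] [NormedSpace ℝ X]
    [NormedAddCommGroup Y] [NormedSpace ℝ Y] (T : X →L[ℝ] Y) (x : X)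
    (hpres : PreservesBJAt T x) (hTx : SmoothPt (T x)) : SmoothPt x := by
  obtain ⟨hTx0, g, hg, hg_unique⟩ := hTx
  have hx : x ≠ 0 := ne_zero_of_map hTx0
  have hJ : ∀ f ∈ SuppFunc x, f = (‖x‖ / ‖T x‖) • g ∘L T := fun _ hf ↦
    hpres.eq_smul_comp_of_mem_suppFunc hTx0 hg hg_unique hf
  obtain ⟨f₀, hf₀⟩ := suppFunc_nonempty hx
  exact ⟨hx, f₀, hf₀, fun f hf ↦ (hJ f hf).trans (hJ f₀ hf₀).symm⟩
end

section
/- Let X, Y be real Banach spaces and T : X → Y a bounded linear operator. Let P_B = {x ∈ X : ∀ y, x ⊥_B y → Tx ⊥_B Ty} be the set of points at which T preserves Birkhoff-James orthogonality. Then P_B ∩ Sm(X) is closed in the subspace topology of Sm(X), where Sm(X) denotes the set of smooth points of X. -/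
open Metric Filter Set

/-
At a smooth point `x` with supporting functional `f`, the functional is the one-sided
directional derivative of the norm: `f y = inf_{t > 0} (‖x + t y‖ - ‖x‖) / t`. Indeed the
right-hand side is sublinear, so by Hahn–Banach every value of it is attained by some
supporting functional, which must be `f`. Two consequences: `x ⊥_B y ↔ f y = 0`, and, since
each difference quotient is continuous in `x` and dominates `F y` for every supporting
functional `F` at `x`, supporting functionals at `xₙ → x` converge pointwise to `f`.

Now let `xₙ → x` in `P_B ∩ Sm(X)`, with supporting functionals `Fₙ`, and let `x ⊥_B y`. Then
`zₙ = y - (Fₙ y / ‖xₙ‖) xₙ` lies in `ker Fₙ`, so `xₙ ⊥_B zₙ` and hence `T xₙ ⊥_B T zₙ`. As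
`Fₙ y → f y = 0`, `zₙ → y`, and Birkhoff–James orthogonality is a closed relation.
-/

open Topology

section NormRightDeriv

variable {X : Type*} [NormedAddCommGroup X] [NormedSpace ℝ X]

noncomputable def normSlope (x y : X) (t : ℝ) : ℝ := (‖x + t • y‖ - ‖x‖) / t

noncomputable def normRightDeriv (x y : X) : ℝ := ⨅ t : Ioi (0 : ℝ), normSlope x y t

lemma abs_normSlope_le (x y : X) (t : ℝ) : |normSlope x y t| ≤ ‖y‖ := by
  rcases eq_or_ne t 0 with rfl | ht
  · simp [normSlope]
  rw [normSlope, abs_div, div_le_iff₀ (abs_pos.2 ht)]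
  calc |‖x + t • y‖ - ‖x‖| ≤ ‖(x + t • y) - x‖ := abs_norm_sub_norm_le _ _
    _ = ‖y‖ * |t| := by rw [add_sub_cancel_left, norm_smul, Real.norm_eq_abs, mul_comm]

lemma convexOn_norm_add_smul (x y : X) : ConvexOn ℝ univ fun t : ℝ => ‖x + t • y‖ := by
  refine ⟨convex_univ, fun s _ t _ a b ha hb hab => ?_⟩
  have key : x + (a • s + b • t) • y = a • (x + s • y) + b • (x + t • y) := by
    rw [smul_add, smul_add, smul_smul, smul_smul, add_smul, smul_eq_mul, smul_eq_mul]
    nth_rewrite 1 [← one_smul ℝ x, ← hab, add_smul]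
    abel
  calc ‖x + (a • s + b • t) • y‖ ≤ ‖a • (x + s • y)‖ + ‖b • (x + t • y)‖ := by
        rw [key]; exact norm_add_le _ _
    _ = a • ‖x + s • y‖ + b • ‖x + t • y‖ := by
        rw [norm_smul_of_nonneg ha, norm_smul_of_nonneg hb]; rfl

lemma normSlope_mono (x y : X) {s t : ℝ} (hs : 0 < s) (hst : s ≤ t) :
    normSlope x y s ≤ normSlope x y t := by
  have h := (convexOn_norm_add_smul x y).secant_mono (a := 0) (mem_univ _) (mem_univ s)
    (mem_univ t) hs.ne' (hs.trans_le hst).ne' hst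
  simpa only [normSlope, zero_smul, add_zero, sub_zero] using h

lemma bddBelow_range_normSlope (x y : X) :
    BddBelow (range fun t : Ioi (0 : ℝ) => normSlope x y t) :=
  ⟨-‖y‖, by rintro _ ⟨t, rfl⟩; exact neg_le_of_abs_le (abs_normSlope_le x y t)⟩

lemma normRightDeriv_le_normSlope (x y : X) {t : ℝ} (ht : 0 < t) :
    normRightDeriv x y ≤ normSlope x y t :=
  ciInf_le (bddBelow_range_normSlope x y) ⟨t, ht⟩

lemma le_normRightDeriv (x y : X) {c : ℝ} (h : ∀ t : ℝ, 0 < t → c ≤ normSlope x y t) :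
    c ≤ normRightDeriv x y :=
  le_ciInf fun t => h t t.2

lemma exists_normSlope_lt (x y : X) {c : ℝ} (h : normRightDeriv x y < c) :
    ∃ t : ℝ, 0 < t ∧ normSlope x y t < c := by
  obtain ⟨t, ht⟩ := exists_lt_of_ciInf_lt h
  exact ⟨t, t.2, ht⟩

lemma normRightDeriv_le_norm (x y : X) : normRightDeriv x y ≤ ‖y‖ :=
  (normRightDeriv_le_normSlope x y one_pos).trans (le_of_abs_le (abs_normSlope_le x y 1))

lemma normRightDeriv_eq_of_normSlope_eq (x y : X) {c : ℝ}
    (h : ∀ t : ℝ, 0 < t → normSlope x y t = c) :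
    normRightDeriv x y = c :=
  le_antisymm ((normRightDeriv_le_normSlope x y one_pos).trans_eq (h 1 one_pos))
    (le_normRightDeriv x y fun t ht => (h t ht).ge)

lemma normRightDeriv_zero (x : X) : normRightDeriv x 0 = 0 :=
  normRightDeriv_eq_of_normSlope_eq x 0 fun t _ => by simp [normSlope]

lemma normRightDeriv_self (x : X) : normRightDeriv x x = ‖x‖ :=
  normRightDeriv_eq_of_normSlope_eq x x fun t ht => by
    rw [normSlope, show x + t • x = (1 + t) • x by module, norm_smul_of_nonneg (by positivity)]
    field_simp
    ring

lemma normRightDeriv_neg_self (x : X) : normRightDeriv x (-x) = -‖x‖ := by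
  refine le_antisymm ?_ (le_normRightDeriv x _ fun t _ => by
    simpa using neg_le_of_abs_le (abs_normSlope_le x (-x) t))
  calc normRightDeriv x (-x) ≤ normSlope x (-x) (1 / 2) :=
        normRightDeriv_le_normSlope x _ (by norm_num)
    _ = -‖x‖ := by
      rw [normSlope, show x + (1 / 2 : ℝ) • -x = (1 / 2 : ℝ) • x by module,
        norm_smul_of_nonneg (by norm_num)]
      ring


lemma normSlope_add_le (x u v : X) {t : ℝ} (ht : 0 < t) :
    normSlope x (u + v) (t / 2) ≤ normSlope x u t + normSlope x v t := by
  have key : x + (t / 2) • (u + v) = (1 / 2 : ℝ) • (x + t • u) + (1 / 2 : ℝ) • (x + t • v) := by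
    module
  have h : ‖x + (t / 2) • (u + v)‖ ≤ 1 / 2 * ‖x + t • u‖ + 1 / 2 * ‖x + t • v‖ := by
    rw [key, ← norm_smul_of_nonneg (by norm_num : (0 : ℝ) ≤ 1 / 2),
      ← norm_smul_of_nonneg (by norm_num : (0 : ℝ) ≤ 1 / 2)]
    exact norm_add_le _ _
  rw [normSlope, normSlope, normSlope, ← add_div, div_le_div_iff₀ (by positivity) ht]
  nlinarith

lemma normRightDeriv_add_le (x u v : X) :
    normRightDeriv x (u + v) ≤ normRightDeriv x u + normRightDeriv x v := by
  refine le_of_forall_pos_le_add fun ε hε => ?_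
  obtain ⟨t₁, ht₁, hu⟩ := exists_normSlope_lt x u (lt_add_of_pos_right _ (half_pos hε))
  obtain ⟨t₂, ht₂, hv⟩ := exists_normSlope_lt x v (lt_add_of_pos_right _ (half_pos hε))
  have ht : 0 < min t₁ t₂ := lt_min ht₁ ht₂
  calc normRightDeriv x (u + v) ≤ normSlope x (u + v) (min t₁ t₂ / 2) :=
        normRightDeriv_le_normSlope x _ (half_pos ht)
    _ ≤ normSlope x u (min t₁ t₂) + normSlope x v (min t₁ t₂) := normSlope_add_le x u v ht
    _ ≤ normSlope x u t₁ + normSlope x v t₂ :=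
        add_le_add (normSlope_mono x u ht (min_le_left _ _))
          (normSlope_mono x v ht (min_le_right _ _))
    _ ≤ normRightDeriv x u + normRightDeriv x v + ε := by linarith

lemma normSlope_smul (x y : X) {c : ℝ} (hc : 0 < c) (t : ℝ) :
    normSlope x (c • y) t = c * normSlope x y (t * c) := by
  rcases eq_or_ne t 0 with rfl | ht
  · simp [normSlope]
  rw [normSlope, normSlope, smul_smul]
  field_simp

lemma normRightDeriv_smul (x y : X) {c : ℝ} (hc : 0 < c) :
    normRightDeriv x (c • y) = c * normRightDeriv x y := by
  refine le_antisymm ?_ (le_normRightDeriv x _ fun t ht => ?_)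
  · rw [← div_le_iff₀' hc]
    refine le_normRightDeriv x y fun t ht => ?_
    rw [div_le_iff₀' hc]
    calc normRightDeriv x (c • y) ≤ normSlope x (c • y) (t / c) :=
          normRightDeriv_le_normSlope x _ (div_pos ht hc)
      _ = c * normSlope x y t := by rw [normSlope_smul x y hc, div_mul_cancel₀ _ hc.ne']
  · rw [normSlope_smul x y hc]
    exact mul_le_mul_of_nonneg_left (normRightDeriv_le_normSlope x y (mul_pos ht hc)) hc.le

end NormRightDeriv

section SupportingFunctionals

variable {X : Type*} [NormedAddCommGroup X] [NormedSpace ℝ X] {x : X} {f : StrongDual ℝ X}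

lemma BJOrth.neg_right {y : X} (h : BJOrth x y) : BJOrth x (-y) :=
  fun lam => by simpa using h (-lam)

lemma BJOrth.normRightDeriv_nonneg {y : X} (h : BJOrth x y) : 0 ≤ normRightDeriv x y :=
  le_normRightDeriv x y fun t ht => div_nonneg (sub_nonneg.2 (h t)) ht.le

lemma isClosed_setOf_bjOrth : IsClosed {p : X × X | BJOrth p.1 p.2} := by
  simp only [BJOrth, ofPred_forall]
  exact isClosed_iInter fun lam => isClosed_le (by fun_prop) (by fun_prop)

lemma apply_le_norm_of_mem_suppFunc (hf : f ∈ SuppFunc x) (y : X) : f y ≤ ‖y‖ :=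
  (le_abs_self _).trans ((f.le_opNorm y).trans_eq (by rw [hf.1, one_mul]))

lemma apply_le_normSlope_of_mem_suppFunc (hf : f ∈ SuppFunc x) (y : X) {t : ℝ} (ht : 0 < t) :
    f y ≤ normSlope x y t := by
  have h := apply_le_norm_of_mem_suppFunc hf (x + t • y)
  rw [map_add, map_smul, hf.2, smul_eq_mul] at h
  rw [normSlope, le_div_iff₀ ht]
  linarith

lemma bjOrth_of_mem_suppFunc_s2 (hf : f ∈ SuppFunc x) {y : X} (hy : f y = 0) : BJOrth x y :=
  fun lam => by
    simpa [hf.2, hy] using apply_le_norm_of_mem_suppFunc hf (x + lam • y)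

lemma bjOrth_sub_smul_of_mem_suppFunc (hx : x ≠ 0) (hf : f ∈ SuppFunc x) (y : X) :
    BJOrth x (y - (f y / ‖x‖) • x) :=
  bjOrth_of_mem_suppFunc_s2 hf (by simp [hf.2, norm_ne_zero_iff.2 hx])

lemma smul_normRightDeriv_le (x y : X) (c : ℝ) :
    c * normRightDeriv x y ≤ normRightDeriv x (c • y) := by
  rcases lt_trichotomy c 0 with hc | rfl | hc
  · have hneg : 0 ≤ normRightDeriv x y + normRightDeriv x (-y) := by
      simpa [normRightDeriv_zero] using normRightDeriv_add_le x y (-y)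
    rw [show c • y = (-c) • -y by module, normRightDeriv_smul x _ (neg_pos.2 hc)]
    nlinarith
  · simp [normRightDeriv_zero]
  · exact (normRightDeriv_smul x y hc).ge

lemma exists_linearMap_le_normRightDeriv (x y : X) :
    ∃ g : X →ₗ[ℝ] ℝ, (∀ v, g v ≤ normRightDeriv x v) ∧ g y = normRightDeriv x y := by
  have H : ∀ c : ℝ, c • y = 0 → RingHom.id ℝ c • normRightDeriv x y = 0 := fun c hc => by
    rcases smul_eq_zero.1 hc with rfl | rfl <;> simp [normRightDeriv_zero]
  let g₀ := LinearPMap.mkSpanSingleton' y (normRightDeriv x y) H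
  have hy : y ∈ g₀.domain := Submodule.mem_span_singleton_self y
  obtain ⟨g, hg₀, hg⟩ := exists_extension_of_le_sublinear g₀ (normRightDeriv x)
    (fun c hc v => normRightDeriv_smul x v hc) (normRightDeriv_add_le x) <| by
      rintro ⟨v, hv⟩
      obtain ⟨c, rfl⟩ := Submodule.mem_span_singleton.1 hv
      rw [LinearPMap.mkSpanSingleton'_apply]
      exact smul_normRightDeriv_le x y c
  exact ⟨g, hg, by rw [hg₀ ⟨y, hy⟩, LinearPMap.mkSpanSingleton'_apply_self]⟩

lemma exists_mem_suppFunc_apply_eq (hx : x ≠ 0) (y : X) :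
    ∃ f ∈ SuppFunc x, f y = normRightDeriv x y := by
  obtain ⟨g, hg, hgy⟩ := exists_linearMap_le_normRightDeriv x y
  have hbound : ∀ v, ‖g v‖ ≤ 1 * ‖v‖ := fun v => by
    have := hg (-v)
    rw [map_neg] at this
    rw [one_mul, Real.norm_eq_abs, abs_le]
    exact ⟨by linarith [normRightDeriv_le_norm x (-v), norm_neg v],
      (hg v).trans (normRightDeriv_le_norm x v)⟩
  let G := g.mkContinuous 1 hbound
  have hGx : G x = ‖x‖ := by
    have := hg (-x)
    rw [map_neg, normRightDeriv_neg_self] at this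
    exact le_antisymm ((hg x).trans_eq (normRightDeriv_self x)) (by simp [G]; linarith)
  have hGnorm : ‖G‖ = 1 := by
    refine le_antisymm (g.mkContinuous_norm_le zero_le_one hbound) ?_
    simpa [hGx, norm_ne_zero_iff.2 hx] using G.ratio_le_opNorm x
  exact ⟨G, ⟨hGnorm, hGx⟩, hgy⟩

lemma SmoothPt.apply_eq_normRightDeriv (hx : SmoothPt x) (hf : f ∈ SuppFunc x) (y : X) :
    f y = normRightDeriv x y := by
  obtain ⟨g, hg, hgy⟩ := exists_mem_suppFunc_apply_eq hx.1 y
  rw [hx.2.unique hf hg, hgy]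

lemma SmoothPt.bjOrth_iff (hx : SmoothPt x) (hf : f ∈ SuppFunc x) (y : X) :
    BJOrth x y ↔ f y = 0 := by
  refine ⟨fun h => ?_, bjOrth_of_mem_suppFunc_s2 hf⟩
  have h₁ := h.normRightDeriv_nonneg
  have h₂ := h.neg_right.normRightDeriv_nonneg
  rw [← hx.apply_eq_normRightDeriv hf] at h₁ h₂
  rw [map_neg] at h₂
  linarith

lemma SmoothPt.eventually_apply_lt (hx : SmoothPt x) (hf : f ∈ SuppFunc x) {ι : Type*}
    {l : Filter ι} {u : ι → X} (hu : Tendsto u l (𝓝 x)) {F : ι → StrongDual ℝ X}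
    (hF : ∀ i, F i ∈ SuppFunc (u i)) {y : X} {c : ℝ} (hc : f y < c) :
    ∀ᶠ i in l, F i y < c := by
  rw [hx.apply_eq_normRightDeriv hf] at hc
  obtain ⟨t, ht, hlt⟩ := exists_normSlope_lt x y hc
  have hcont : Continuous fun z : X => normSlope z y t := by unfold normSlope; fun_prop
  filter_upwards [((hcont.tendsto x).comp hu).eventually_lt_const hlt] with i hi
  exact (apply_le_normSlope_of_mem_suppFunc (hF i) y ht).trans_lt hi

lemma SmoothPt.tendsto_apply (hx : SmoothPt x) (hf : f ∈ SuppFunc x) {ι : Type*}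
    {l : Filter ι} {u : ι → X} (hu : Tendsto u l (𝓝 x)) {F : ι → StrongDual ℝ X}
    (hF : ∀ i, F i ∈ SuppFunc (u i)) (y : X) : Tendsto (fun i => F i y) l (𝓝 (f y)) := by
  refine tendsto_order.2 ⟨fun a ha => ?_, fun b hb => hx.eventually_apply_lt hf hu hF hb⟩
  filter_upwards [hx.eventually_apply_lt hf hu hF (y := -y) (c := -a) (by simpa using ha)]
    with i hi
  simp only [map_neg] at hi
  linarith

end SupportingFunctionals

theorem stmt_2_general {X Y : Type*} [NormedAddCommGroup X] [NormedSpace ℝ X]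
    [NormedAddCommGroup Y] [NormedSpace ℝ Y] (T : X →L[ℝ] Y) :
    IsClosed (Subtype.val ⁻¹' {x : X | PreservesBJAt T x} :
      Set {x : X // SmoothPt x}) := by
  refine IsSeqClosed.isClosed fun u p hu hlim y hy => ?_
  have hup : Tendsto (fun n => (u n : X)) atTop (𝓝 p) :=
    (continuous_subtype_val.tendsto p).comp hlim
  obtain ⟨f, hf⟩ := p.2.2.exists
  choose F hF using fun n => (u n).2.2.exists
  set z := fun n => y - (F n y / ‖(u n : X)‖) • (u n : X)
  have hzy : Tendsto z atTop (𝓝 y) := by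
    have := ((p.2.tendsto_apply hf hup hF y).div hup.norm (norm_ne_zero_iff.2 p.2.1)).smul hup
    simpa [(p.2.bjOrth_iff hf y).1 hy, z] using tendsto_const_nhds.sub this
  refine isClosed_setOf_bjOrth.mem_of_tendsto
    (((T.continuous.tendsto _).comp hup).prodMk_nhds ((T.continuous.tendsto _).comp hzy))
    (Eventually.of_forall fun n => hu n (z n) ?_)
  exact bjOrth_sub_smul_of_mem_suppFunc (u n).2.1 (hF n) y

theorem stmt_2 {X Y : Type*} [NormedAddCommGroup X] [NormedSpace ℝ X] [CompleteSpace X]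
    [NormedAddCommGroup Y] [NormedSpace ℝ Y] [CompleteSpace Y] (T : X →L[ℝ] Y) :
    IsClosed (Subtype.val ⁻¹' {x : X | PreservesBJAt T x} :
      Set {x : X // SmoothPt x}) :=
  stmt_2_general T
end

section
/- Let X be a real Banach space in which the set Sm(X) of smooth points is dense, and let Y be a real normed space. If a nonzero bounded linear operator T : X → Y preserves Birkhoff-James orthogonality at each smooth point of X, then T is injective. -/
open Metric Filter Set

/-!
Suppose `T z = 0` with `z ≠ 0`. If `x` is a smooth point and `f` its supporting functional with
`f z ≠ 0`, then `v = f x • z - f z • x` lies in `ker f`, so `x ⊥_B v`; hence `T x ⊥_B T v`, and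
`T v = -(f z) • T x` forces `T x = 0`. Every `x` close enough to `z` has `f z > 0`, so `T`
vanishes on the smooth points of a ball around `z`, hence, by density and continuity, on the
whole ball, and therefore everywhere.
-/

section

variable {X Y : Type*} [NormedAddCommGroup X] [NormedSpace ℝ X]
  [NormedAddCommGroup Y] [NormedSpace ℝ Y]

theorem BJOrth.eq_zero_of_smul_self {y : Y} {c : ℝ} (hc : c ≠ 0) (h : BJOrth y (c • y)) :
    y = 0 := by
  have h' := h (-c⁻¹)
  rwa [smul_smul, neg_mul, inv_mul_cancel₀ hc, neg_one_smul, add_neg_cancel, norm_zero,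
    norm_le_zero_iff] at h'

theorem BJOrth.of_mem_suppFunc {x v : X} {f : StrongDual ℝ X} (hf : f ∈ SuppFunc x)
    (hv : f v = 0) : BJOrth x v := fun lam =>
  calc ‖x‖ = f (x + lam • v) := by simp [hv, hf.2]
    _ ≤ ‖f‖ * ‖x + lam • v‖ := le_of_abs_le (f.le_opNorm _)
    _ = ‖x + lam • v‖ := by rw [hf.1, one_mul]

theorem norm_sub_norm_sub_le_of_mem_suppFunc {x : X} {f : StrongDual ℝ X} (hf : f ∈ SuppFunc x)
    (z : X) : ‖x‖ - ‖x - z‖ ≤ f z := by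
  have : f (x - z) ≤ ‖x - z‖ := by
    simpa [hf.1] using le_of_abs_le (f.le_opNorm (x - z))
  rw [map_sub, hf.2] at this
  linarith

theorem PreservesBJAt.map_eq_zero_of_apply_ne_zero {T : X →L[ℝ] Y} {x z : X}
    {f : StrongDual ℝ X} (hT : PreservesBJAt T x) (hf : f ∈ SuppFunc x) (hz : T z = 0)
    (hfz : f z ≠ 0) : T x = 0 := by
  have hv : f (f x • z - f z • x) = 0 := by simp only [map_sub, map_smul, smul_eq_mul]; ring
  have hTv : T (f x • z - f z • x) = -f z • T x := by simp [hz]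
  exact (hTv ▸ hT _ (.of_mem_suppFunc hf hv)).eq_zero_of_smul_self (neg_ne_zero.2 hfz)

theorem PreservesBJAt.map_eq_zero_of_mem_ball {T : X →L[ℝ] Y} {x z : X} (hx : SmoothPt x)
    (hT : PreservesBJAt T x) (hz : T z = 0) (hxz : x ∈ ball z (‖z‖ / 2)) : T x = 0 := by
  obtain ⟨f, hf, -⟩ := hx.2
  rw [mem_ball, dist_eq_norm] at hxz
  have : ‖z‖ - ‖x‖ ≤ ‖x - z‖ := norm_sub_rev x z ▸ norm_sub_norm_le z x
  have hfz : 0 < f z := by linarith [norm_sub_norm_sub_le_of_mem_suppFunc hf z]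
  exact hT.map_eq_zero_of_apply_ne_zero hf hz hfz.ne'

theorem ContinuousLinearMap.eq_zero_of_dense_inter_isOpen {T : X →L[ℝ] Y} {s U : Set X}
    (hs : Dense s) (hU : IsOpen U) (hne : U.Nonempty) (h : ∀ x ∈ U ∩ s, T x = 0) : T = 0 := by
  have hUker : U ⊆ LinearMap.ker (T : X →ₗ[ℝ] Y) := fun x hx =>
    Set.EqOn.of_subset_closure (s := U ∩ s) h T.continuous.continuousOn continuousOn_const
      inter_subset_left (hs.open_subset_closure_inter hU) hx
  have htop := (LinearMap.ker (T : X →ₗ[ℝ] Y)).eq_top_of_nonempty_interior'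
    (hne.mono (interior_maximal hUker hU))
  ext x
  exact LinearMap.mem_ker.1 (htop ▸ Submodule.mem_top)

end

theorem stmt_5_general {X Y : Type*} [NormedAddCommGroup X] [NormedSpace ℝ X]
    [NormedAddCommGroup Y] [NormedSpace ℝ Y]
    (T : X →L[ℝ] Y) (hT : T ≠ 0) (hdense : Dense {x : X | SmoothPt x})
    (hpres : ∀ x : X, SmoothPt x → PreservesBJAt T x) :
    Function.Injective T := by
  refine (injective_iff_map_eq_zero T).2 fun z hz => ?_
  by_contra hz0
  exact hT <| T.eq_zero_of_dense_inter_isOpen hdense isOpen_ball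
    ⟨z, mem_ball_self (by positivity)⟩
    fun x ⟨hxz, hx⟩ => (hpres x hx).map_eq_zero_of_mem_ball hx hz hxz

theorem stmt_5 {X Y : Type*} [NormedAddCommGroup X] [NormedSpace ℝ X] [CompleteSpace X]
    [NormedAddCommGroup Y] [NormedSpace ℝ Y]
    (T : X →L[ℝ] Y) (hT : T ≠ 0) (hdense : Dense {x : X | SmoothPt x})
    (hpres : ∀ x : X, SmoothPt x → PreservesBJAt T x) :
    Function.Injective T :=
  stmt_5_general T hT hdense hpres
end

section
/- Let X be a real Banach space in which the set of smooth points Sm(X) is a dense G_δ subset. If a bounded linear operator T : X → X preserves Birkhoff-James orthogonality at each smooth point of X, then T is a scalar multiple of an isometry: there exists λ ≥ 0 with ‖Tx‖ = λ‖x‖ for all x. -/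
open Metric Filter Set

/-!
If `f` is a norm-one supporting functional at `u` and `T` preserves Birkhoff-James orthogonality
at `u`, then `u ⊥_B y - (f y / ‖u‖) u` gives `‖T u‖ f y ≤ ‖u‖ ‖T y‖` for every `y`.
By density and compactness of bounded slopes, every point `z` and direction `v` then admit a
common slope `a` which supports both `c ↦ ‖z + c v‖` and, after scaling by `‖T z‖ / ‖z‖`,
`c ↦ ‖T (z + c v)‖`. Along a segment avoiding `0`, this bounds the variation of the ratio
`‖T z‖ / ‖z‖` between nearby points by the product of their distance and the increment of the
(monotone) slopes, so the ratio is constant on the segment. Any two nonzero vectors are either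
proportional or joined by such a segment.
-/

open Topology

/-- `n₁, n₂` are the norms of two points `d` apart on a line, `G₁, G₂` the norms of their images,
and `a₁, a₂` the slopes at these points given by `exists_slope_of_dense`. -/
theorem abs_div_sub_div_le_of_slopes {n₁ n₂ G₁ G₂ a₁ a₂ d m C : ℝ} (hm : 0 < m)
    (hn₁ : m ≤ n₁) (hn₂ : m ≤ n₂) (hG₁ : 0 ≤ G₁) (hG₂ : 0 ≤ G₂)
    (hC₁ : G₁ ≤ C * n₁) (hC₂ : G₂ ≤ C * n₂)
    (h₁ : n₁ + d * a₁ ≤ n₂) (h₂ : n₂ + -d * a₂ ≤ n₁)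
    (h₃ : G₁ * (n₁ + d * a₁) ≤ n₁ * G₂) (h₄ : G₂ * (n₂ + -d * a₂) ≤ n₂ * G₁) :
    |G₂ / n₂ - G₁ / n₁| ≤ d * (C / m * a₂ - C / m * a₁) := by
  have hn₁' : 0 < n₁ := hm.trans_le hn₁
  have hn₂' : 0 < n₂ := hm.trans_le hn₂
  obtain ⟨ρ₁, rfl⟩ : ∃ ρ, G₁ = ρ * n₁ := ⟨G₁ / n₁, by field_simp⟩
  obtain ⟨ρ₂, rfl⟩ : ∃ ρ, G₂ = ρ * n₂ := ⟨G₂ / n₂, by field_simp⟩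
  have hρ₁ : 0 ≤ ρ₁ := nonneg_of_mul_nonneg_left hG₁ hn₁'
  have hρ₂ : 0 ≤ ρ₂ := nonneg_of_mul_nonneg_left hG₂ hn₂'
  have hρC₁ : ρ₁ ≤ C := le_of_mul_le_mul_right hC₁ hn₁'
  have hρC₂ : ρ₂ ≤ C := le_of_mul_le_mul_right hC₂ hn₂'
  have hD : 0 ≤ d * (a₂ - a₁) := by linarith
  have hdown : (ρ₁ - ρ₂) * n₂ ≤ C * (d * (a₂ - a₁)) :=
    calc (ρ₁ - ρ₂) * n₂ ≤ ρ₁ * (n₂ - n₁ - d * a₁) := by nlinarith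
      _ ≤ ρ₁ * (d * (a₂ - a₁)) := by gcongr; linarith
      _ ≤ C * (d * (a₂ - a₁)) := by gcongr
  have hup : (ρ₂ - ρ₁) * n₁ ≤ C * (d * (a₂ - a₁)) :=
    calc (ρ₂ - ρ₁) * n₁ ≤ ρ₂ * (n₁ - n₂ + d * a₂) := by nlinarith
      _ ≤ ρ₂ * (d * (a₂ - a₁)) := by gcongr; linarith
      _ ≤ C * (d * (a₂ - a₁)) := by gcongr
  rw [mul_div_cancel_right₀ _ hn₁'.ne', mul_div_cancel_right₀ _ hn₂'.ne', abs_sub_le_iff]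
  have hrw : d * (C / m * a₂ - C / m * a₁) = C * (d * (a₂ - a₁)) / m := by ring
  rw [hrw, le_div_iff₀ hm, le_div_iff₀ hm]
  constructor <;> nlinarith

theorem eq_of_abs_sub_le_mul_sub {ρ a : ℝ → ℝ} {x y : ℝ} (hxy : x ≤ y)
    (h : ∀ t ∈ Icc x y, ∀ s ∈ Icc x y, t ≤ s → |ρ s - ρ t| ≤ (s - t) * (a s - a t)) :
    ρ x = ρ y := by
  have hbound : ∀ N : ℕ, |ρ y - ρ x| ≤ (y - x) * (a y - a x) * (1 / ((N : ℝ) + 1)) := by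
    intro N
    set δ := (y - x) / (N + 1)
    have hδ : 0 ≤ δ := by positivity
    set p : ℕ → ℝ := fun i => x + i * δ
    have hp0 : p 0 = x := by simp [p]
    have hpN : p (N + 1) = y := by simp only [p, δ]; push_cast; field_simp; ring
    have hp : ∀ i ≤ N + 1, p i ∈ Icc x y := fun i hi => by
      refine ⟨le_add_of_nonneg_right (by positivity), ?_⟩
      rw [← hpN]; simp only [p]; gcongr
    have hstep : ∀ i ∈ Finset.range (N + 1),
        |ρ (p (i + 1)) - ρ (p i)| ≤ δ * (a (p (i + 1)) - a (p i)) := fun i hi => by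
      have hi := Finset.mem_range.1 hi
      have := h _ (hp i hi.le) _ (hp (i + 1) hi) (by simp only [p]; push_cast; linarith)
      simpa [p, add_mul, add_sub_add_left_eq_sub] using this
    calc |ρ y - ρ x| = |∑ i ∈ Finset.range (N + 1), (ρ (p (i + 1)) - ρ (p i))| := by
          rw [Finset.sum_range_sub (fun i => ρ (p i)), hp0, hpN]
      _ ≤ ∑ i ∈ Finset.range (N + 1), δ * (a (p (i + 1)) - a (p i)) :=
          (Finset.abs_sum_le_sum_abs _ _).trans (Finset.sum_le_sum hstep)
      _ = (y - x) * (a y - a x) * (1 / ((N : ℝ) + 1)) := by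
          rw [← Finset.mul_sum, Finset.sum_range_sub (fun i => a (p i)), hp0, hpN]; ring
  have hlim := (tendsto_one_div_add_atTop_nhds_zero_nat (𝕜 := ℝ)).const_mul ((y - x) * (a y - a x))
  rw [mul_zero] at hlim
  exact (sub_eq_zero.1 (abs_nonpos_iff.1 (ge_of_tendsto' hlim hbound))).symm

theorem apply_le_norm_of_norm_le_one {X : Type*} [NormedAddCommGroup X] [NormedSpace ℝ X]
    {f : StrongDual ℝ X} (hf : ‖f‖ ≤ 1) (y : X) : f y ≤ ‖y‖ :=
  (le_abs_self _).trans (by simpa using f.le_of_opNorm_le hf y)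

theorem BJOrth.abs_mul_norm_le {X : Type*} [NormedAddCommGroup X] [NormedSpace ℝ X] {u v : X}
    (h : BJOrth u v) (c : ℝ) : |c| * ‖u‖ ≤ ‖c • u + v‖ := by
  rcases eq_or_ne c 0 with rfl | hc
  · simp
  calc |c| * ‖u‖ ≤ |c| * ‖u + c⁻¹ • v‖ := by gcongr; exact h _
    _ = ‖c • u + v‖ := by rw [← Real.norm_eq_abs, ← norm_smul, smul_add, smul_inv_smul₀ hc]

theorem bjOrth_of_apply_eq_zero {X : Type*} [NormedAddCommGroup X] [NormedSpace ℝ X] {u v : X}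
    {f : StrongDual ℝ X} (hf : ‖f‖ ≤ 1) (hfu : f u = ‖u‖) (hv : f v = 0) : BJOrth u v := fun c =>
  calc ‖u‖ = f (u + c • v) := by simp [hfu, hv]
    _ ≤ ‖u + c • v‖ := apply_le_norm_of_norm_le_one hf _

section

variable {X Y : Type*} [NormedAddCommGroup X] [NormedSpace ℝ X]
  [NormedAddCommGroup Y] [NormedSpace ℝ Y] {T : X →L[ℝ] Y}

theorem PreservesBJAt.norm_mul_apply_le {u : X} (hT : PreservesBJAt T u)
    {f : StrongDual ℝ X} (hf : ‖f‖ ≤ 1) (hfu : f u = ‖u‖) (y : X) :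
    ‖T u‖ * f y ≤ ‖u‖ * ‖T y‖ := by
  rcases eq_or_ne u 0 with rfl | hu
  · simp
  have hu' : ‖u‖ ≠ 0 := norm_ne_zero_iff.2 hu
  set c := f y / ‖u‖
  have hker : f (y - c • u) = 0 := by simp [c, hfu, hu']
  have key := (hT _ (bjOrth_of_apply_eq_zero hf hfu hker)).abs_mul_norm_le c
  rw [← map_smul, ← map_add, add_sub_cancel] at key
  calc ‖T u‖ * f y = ‖u‖ * (c * ‖T u‖) := by simp only [c]; field_simp
    _ ≤ ‖u‖ * (|c| * ‖T u‖) := by gcongr; exact le_abs_self c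
    _ ≤ ‖u‖ * ‖T y‖ := by gcongr

theorem PreservesBJAt.exists_dual {u : X} (hT : PreservesBJAt T u) :
    ∃ f : StrongDual ℝ X, ‖f‖ ≤ 1 ∧ f u = ‖u‖ ∧ ∀ y, ‖T u‖ * f y ≤ ‖u‖ * ‖T y‖ := by
  obtain ⟨f, hf, hfu⟩ := exists_dual_vector'' ℝ u
  exact ⟨f, hf, hfu, hT.norm_mul_apply_le hf hfu⟩

theorem exists_slope_of_dense (hd : Dense {u | PreservesBJAt T u}) (z v : X) :
    ∃ a : ℝ, ∀ c : ℝ, ‖z‖ + c * a ≤ ‖z + c • v‖ ∧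
      ‖T z‖ * (‖z‖ + c * a) ≤ ‖z‖ * ‖T (z + c • v)‖ := by
  obtain ⟨u, huD, hu⟩ := mem_closure_iff_seq_limit.1 (hd z)
  choose f hf hfu hfT using fun n => PreservesBJAt.exists_dual (huD n)
  have hbdd : ∀ n, f n v ∈ Icc (-‖v‖) ‖v‖ := fun n =>
    abs_le.1 (by simpa using (f n).le_of_opNorm_le (hf n) v)
  obtain ⟨a, -, φ, hφ, ha⟩ := isCompact_Icc.tendsto_subseq hbdd
  have hfz : Tendsto (fun n => f n z) atTop (𝓝 ‖z‖) := by
    refine tendsto_of_tendsto_of_tendsto_of_le_of_le (g := fun n => ‖u n‖ - ‖u n - z‖) ?_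
      tendsto_const_nhds (fun n => ?_) (fun n => apply_le_norm_of_norm_le_one (hf n) z)
    · simpa using hu.norm.sub (hu.sub_const z).norm
    · have := apply_le_norm_of_norm_le_one (hf n) (u n - z)
      simp only [map_sub, hfu] at this
      linarith
  refine ⟨a, fun c => ?_⟩
  have hlim : Tendsto (fun n => f (φ n) (z + c • v)) atTop (𝓝 (‖z‖ + c * a)) := by
    simpa using (hfz.comp hφ.tendsto_atTop).add (ha.const_mul c)
  refine ⟨le_of_tendsto' hlim fun n => apply_le_norm_of_norm_le_one (hf _) _, ?_⟩
  have hTu : Tendsto (fun n => ‖T (u (φ n))‖) atTop (𝓝 ‖T z‖) :=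
    ((T.continuous.tendsto z).comp hu).norm.comp hφ.tendsto_atTop
  exact le_of_tendsto_of_tendsto' (hTu.mul hlim)
    ((hu.norm.comp hφ.tendsto_atTop).mul_const _) fun n => hfT _ _

theorem norm_div_eq_of_segment (hd : Dense {u | PreservesBJAt T u}) {x w : X}
    (hseg : ∀ t ∈ Icc (0 : ℝ) 1, x + t • (w - x) ≠ 0) : ‖T x‖ / ‖x‖ = ‖T w‖ / ‖w‖ := by
  set v := w - x
  set z : ℝ → X := fun t => x + t • v
  choose a ha using fun t => exists_slope_of_dense hd (z t) v
  obtain ⟨t₀, ht₀, hmin⟩ := isCompact_Icc.exists_isMinOn (nonempty_Icc.2 zero_le_one)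
    (Continuous.continuousOn (f := fun t => ‖z t‖) (by fun_prop))
  have hm : 0 < ‖z t₀‖ := norm_pos_iff.2 (hseg t₀ ht₀)
  have hz : ∀ t s, z t + (s - t) • v = z s := fun t s => by simp only [z]; module
  have key := eq_of_abs_sub_le_mul_sub (ρ := fun t => ‖T (z t)‖ / ‖z t‖)
    (a := fun t => ‖T‖ / ‖z t₀‖ * a t) zero_le_one fun t ht s hs _ => by
      have h₁ := ha t (s - t)
      have h₂ := ha s (t - s)
      rw [hz] at h₁ h₂
      rw [← neg_sub] at h₂
      exact abs_div_sub_div_le_of_slopes hm (hmin ht) (hmin hs) (norm_nonneg _) (norm_nonneg _)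
        (T.le_opNorm _) (T.le_opNorm _) h₁.1 h₂.1 h₁.2 h₂.2
  simpa [z, v] using key

theorem norm_div_eq_of_linearIndependent (hd : Dense {u | PreservesBJAt T u}) {x w : X}
    (hxw : LinearIndependent ℝ ![x, w]) : ‖T x‖ / ‖x‖ = ‖T w‖ / ‖w‖ := by
  refine norm_div_eq_of_segment hd fun t _ h => ?_
  have := LinearIndependent.pair_iff.1 hxw (1 - t) t (by rw [← h]; module)
  linarith [this.1, this.2]

end

theorem stmt_9_general {X : Type*} [NormedAddCommGroup X] [NormedSpace ℝ X]
    (T : X →L[ℝ] X)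
    (hd : Dense {x : X | SmoothPt x})
    (hpres : ∀ x : X, SmoothPt x → PreservesBJAt T x) :
    ∃ lam : ℝ, 0 ≤ lam ∧ ∀ x : X, ‖T x‖ = lam * ‖x‖ := by
  have hd' : Dense {u | PreservesBJAt T u} := hd.mono hpres
  rcases subsingleton_or_nontrivial X with hX | hX
  · exact ⟨0, le_rfl, fun x => by simp [Subsingleton.elim x 0]⟩
  obtain ⟨x₀, hx₀⟩ := exists_ne (0 : X)
  refine ⟨‖T x₀‖ / ‖x₀‖, by positivity, fun x => ?_⟩
  by_cases hx : ∃ c : ℝ, c • x₀ = x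
  · obtain ⟨c, rfl⟩ := hx
    rw [map_smul, norm_smul, norm_smul]
    field_simp
  have hx0 : x ≠ 0 := fun h => hx ⟨0, by simp [h]⟩
  rw [norm_div_eq_of_linearIndependent hd' ((LinearIndependent.pair_iff' hx₀).2 (not_exists.1 hx)),
    div_mul_cancel₀ _ (norm_ne_zero_iff.2 hx0)]

theorem stmt_9 {X : Type*} [NormedAddCommGroup X] [NormedSpace ℝ X] [CompleteSpace X]
    (T : X →L[ℝ] X)
    (hd : Dense {x : X | SmoothPt x}) (hg : IsGδ {x : X | SmoothPt x})
    (hpres : ∀ x : X, SmoothPt x → PreservesBJAt T x) :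
    ∃ lam : ℝ, 0 ≤ lam ∧ ∀ x : X, ‖T x‖ = lam * ‖x‖ :=
  stmt_9_general T hd hpres
end

section
/- Let X be a real Banach space in which Sm(X) is a dense G_δ subset, and let H be an affine hyperplane in X not passing through the origin. If a bounded linear operator T : X → X preserves Birkhoff-James orthogonality at each point of H, then T is a scalar multiple of an isometry. -/
/-!
By homogeneity of Birkhoff–James orthogonality, `T` preserves it at every point of the open
half-space `f > 0`. At such a point `z`, any norm-one functional `F` supporting `z` has
`z ⊥ ker F`, so `T z ⊥ T (ker F)`, and James's characterization (a Hahn–Banach argument in the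
quotient by `T (ker F)`) yields a functional supporting `T z` that kills `T (ker F)`; this gives
`(‖T z‖ / ‖z‖) • F ≤ ‖T ·‖`. Along a segment in the half-space, `F` is thus a subgradient of
`‖·‖` at `z` and, scaled by the ratio `‖T z‖ / ‖z‖`, of `‖T ·‖`, so the ratio of the two convex
functions cannot change: a partition of the segment shows the ratio is monotone, in both
directions. Hence `‖T x‖ = λ ‖x‖` on the half-space, by symmetry off `ker f`, and by density
everywhere.
-/

open Metric Filter Set

open Topology

theorem mul_one_sub_add_le {r r' r'' x y : ℝ} (hr : 0 ≤ r) (hr'' : 0 ≤ r'') (hx : 0 ≤ x)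
    (hy : 0 ≤ y) (h₁ : r * (1 - x) ≤ r') (h₂ : r' * (1 - y) ≤ r'') :
    r * (1 - (x + y)) ≤ r'' := by
  rcases le_or_gt y 1 with hy1 | hy1
  · nlinarith [mul_le_mul_of_nonneg_right h₁ (sub_nonneg.2 hy1), mul_nonneg (mul_nonneg hr hx) hy]
  · nlinarith

theorem le_of_forall_mul_one_sub_le {ρ d : ℝ → ℝ} {a b : ℝ} (hab : a ≤ b)
    (hρ : ∀ t ∈ Icc a b, 0 ≤ ρ t) (hd : MonotoneOn d (Icc a b))
    (hstep : ∀ t ∈ Icc a b, ∀ s ∈ Icc a b, t ≤ s → ρ t * (1 - (s - t) * (d s - d t)) ≤ ρ s) :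
    ρ a ≤ ρ b := by
  have ha : a ∈ Icc a b := left_mem_Icc.2 hab
  have hpartition : ∀ n : ℕ, 0 < n → ρ a * (1 - (b - a) / n * (d b - d a)) ≤ ρ b := by
    intro n hn
    set Δ := (b - a) / n
    have hΔ : 0 ≤ Δ := div_nonneg (sub_nonneg.2 hab) n.cast_nonneg
    have hnΔ : a + n * Δ = b := by
      simp only [Δ]; rw [mul_div_cancel₀ _ (by positivity)]; ring
    have hmem : ∀ k ≤ n, a + k * Δ ∈ Icc a b := fun k hk =>
      ⟨by nlinarith [k.cast_nonneg (α := ℝ)], hnΔ ▸ by gcongr⟩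
    -- the errors `(s - t) * (d s - d t)` telescope to `Δ * (d b - d a)` along the partition
    suffices ∀ k ≤ n, ρ a * (1 - Δ * (d (a + k * Δ) - d a)) ≤ ρ (a + k * Δ) by
      simpa [hnΔ] using this n le_rfl
    intro k
    induction k with
    | zero => simp
    | succ k ih =>
      intro hk
      have hk' : k ≤ n := k.le_succ.trans hk
      have hsucc : a + ↑(k + 1) * Δ = a + k * Δ + Δ := by push_cast; ring
      have hle : a + k * Δ ≤ a + k * Δ + Δ := le_add_of_nonneg_right hΔ
      have hk1 : a + k * Δ + Δ ∈ Icc a b := hsucc ▸ hmem _ hk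
      rw [hsucc]
      have := mul_one_sub_add_le (hρ a ha) (hρ _ hk1)
        (mul_nonneg hΔ (sub_nonneg.2 (hd ha (hmem k hk') (hmem k hk').1)))
        (mul_nonneg hΔ (sub_nonneg.2 (hd (hmem k hk') hk1 hle)))
        (ih hk') (by simpa using hstep _ (hmem k hk') _ hk1 hle)
      convert this using 3; ring
  have hlim : Tendsto (fun n : ℕ => ρ a * (1 - (b - a) / n * (d b - d a))) atTop (𝓝 (ρ a)) := by
    simpa using (((tendsto_const_div_atTop_nhds_zero_nat (b - a)).mul_const
      (d b - d a)).const_sub 1).const_mul (ρ a)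
  exact le_of_tendsto hlim (eventually_atTop.2 ⟨1, hpartition⟩)

theorem monotoneOn_of_subgradient {m d : ℝ → ℝ} {S : Set ℝ}
    (hmd : ∀ t ∈ S, ∀ s ∈ S, m t + (s - t) * d t ≤ m s) : MonotoneOn d S := by
  intro t ht s hs hts
  rcases hts.eq_or_lt with rfl | hlt
  · rfl
  refine le_of_mul_le_mul_left ?_ (sub_pos.2 hlt)
  linarith [hmd t ht s hs, hmd s hs t ht]

theorem div_le_div_of_forall_subgradient {m h d : ℝ → ℝ} {a b c₀ : ℝ} (hab : a ≤ b)
    (hc₀ : 0 < c₀) (hm : ∀ t ∈ Icc a b, c₀ ≤ m t) (hh : ∀ t ∈ Icc a b, 0 ≤ h t)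
    (hmd : ∀ t ∈ Icc a b, ∀ s ∈ Icc a b, m t + (s - t) * d t ≤ m s)
    (hhd : ∀ t ∈ Icc a b, ∀ s ∈ Icc a b, h t / m t * (m t + (s - t) * d t) ≤ h s) :
    h a / m a ≤ h b / m b := by
  have hd := monotoneOn_of_subgradient hmd
  refine le_of_forall_mul_one_sub_le (d := fun t => d t / c₀) hab
    (fun t ht => div_nonneg (hh t ht) (hc₀.trans_le (hm t ht)).le)
    (fun t ht s hs hts => div_le_div_of_nonneg_right (hd ht hs hts) hc₀.le) ?_
  intro t ht s hs hts
  have hρ : 0 ≤ h t / m t := div_nonneg (hh t ht) (hc₀.trans_le (hm t ht)).le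
  have hδ : 0 ≤ (s - t) * (d s - d t) :=
    mul_nonneg (sub_nonneg.2 hts) (sub_nonneg.2 (hd ht hs hts))
  rw [le_div_iff₀ (hc₀.trans_le (hm s hs))]
  calc h t / m t * (1 - (s - t) * (d s / c₀ - d t / c₀)) * m s
      = h t / m t * (m s - (s - t) * (d s - d t) * (m s / c₀)) := by field_simp
    _ ≤ h t / m t * (m s - (s - t) * (d s - d t)) := by
      have := le_mul_of_one_le_right hδ ((one_le_div hc₀).2 (hm s hs))
      gcongr
    _ ≤ h t / m t * (m t + (s - t) * d t) := by
      gcongr; linarith [hmd s hs t ht]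
    _ ≤ h s := hhd t ht s hs

section

variable {X Y : Type*} [NormedAddCommGroup X] [NormedSpace ℝ X]
  [NormedAddCommGroup Y] [NormedSpace ℝ Y]

theorem BJOrth.smul_left {u v : X} (h : BJOrth u v) (α : ℝ) : BJOrth (α • u) v := by
  rcases eq_or_ne α 0 with rfl | hα
  · intro lam
    simp
  intro lam
  have hsplit : α • u + lam • v = α • (u + (lam / α) • v) := by
    rw [smul_add, smul_smul, mul_div_cancel₀ _ hα]
  rw [hsplit, norm_smul, norm_smul]
  exact mul_le_mul_of_nonneg_left (h _) (norm_nonneg α)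

theorem PreservesBJAt.of_smul {T : X →L[ℝ] Y} {z : X} {α : ℝ} (hα : α ≠ 0)
    (h : PreservesBJAt T (α • z)) : PreservesBJAt T z := fun v hv => by
  simpa [smul_smul, inv_mul_cancel₀ hα] using
    ((h v (hv.smul_left α)).smul_left α⁻¹ : BJOrth (α⁻¹ • T (α • z)) (T v))

theorem StrongDual.apply_le_norm_of_norm_le_one {F : StrongDual ℝ X} (hF : ‖F‖ ≤ 1) (x : X) :
    F x ≤ ‖x‖ :=
  (le_abs_self _).trans (by simpa using F.le_of_opNorm_le hF x)

theorem bjOrth_of_apply_eq_zero_s11 {F : StrongDual ℝ X} (hF : ‖F‖ ≤ 1) {z v : X}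
    (hz : F z = ‖z‖) (hv : F v = 0) : BJOrth z v := fun lam =>
  calc ‖z‖ = F (z + lam • v) := by simp [hz, hv]
    _ ≤ ‖z + lam • v‖ := StrongDual.apply_le_norm_of_norm_le_one hF _

theorem exists_dual_eq_zero_of_bjOrth {M : Submodule ℝ X} {y : X} (hy : ∀ s ∈ M, BJOrth y s) :
    ∃ g : StrongDual ℝ X, ‖g‖ ≤ 1 ∧ g y = ‖y‖ ∧ ∀ s ∈ M, g s = 0 := by
  have hnorm : ‖(Submodule.Quotient.mk y : X ⧸ M)‖ = ‖y‖ := by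
    refine le_antisymm (Submodule.Quotient.norm_mk_le M y) ?_
    refine (QuotientAddGroup.le_norm_iff (S := M.toAddSubgroup)).2 fun m hm => ?_
    have hmy : m - y ∈ M := (Submodule.Quotient.eq M).1 hm
    simpa using hy _ hmy 1
  obtain ⟨φ, hφ, hφy⟩ := exists_dual_vector'' ℝ (Submodule.Quotient.mk y : X ⧸ M)
  refine ⟨φ.comp M.mkQL, ?_, by simpa [hnorm] using hφy,
    fun s hs => by simp [(Submodule.Quotient.mk_eq_zero M).2 hs]⟩
  refine ContinuousLinearMap.opNorm_le_bound _ zero_le_one fun x => ?_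
  calc ‖φ (M.mkQ x)‖ ≤ 1 * ‖M.mkQ x‖ := φ.le_of_opNorm_le hφ _
    _ ≤ 1 * ‖x‖ := by gcongr; exact Submodule.Quotient.norm_mk_le M x

theorem PreservesBJAt.div_mul_apply_le {T : X →L[ℝ] Y} {z : X} (hT : PreservesBJAt T z)
    {F : StrongDual ℝ X} (hF : ‖F‖ ≤ 1) (hFz : F z = ‖z‖) (x : X) :
    ‖T z‖ / ‖z‖ * F x ≤ ‖T x‖ := by
  obtain ⟨g, hg, hgTz, hgker⟩ := exists_dual_eq_zero_of_bjOrth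
      (M := (LinearMap.ker (F : X →ₗ[ℝ] ℝ)).map (T : X →ₗ[ℝ] Y)) (y := T z) <| by
    rintro _ ⟨v, hv, rfl⟩
    exact hT v (bjOrth_of_apply_eq_zero_s11 hF hFz hv)
  rcases eq_or_ne z 0 with rfl | hz
  · simp
  have hz' : ‖z‖ ≠ 0 := norm_ne_zero_iff.2 hz
  have hgTx : g (T x) = F x / ‖z‖ * ‖T z‖ := by
    have hker : F (x - (F x / ‖z‖) • z) = 0 := by
      simp [hFz, hz']
    have := hgker _ ⟨_, hker, rfl⟩
    simp only [ContinuousLinearMap.coe_coe, map_sub, map_smul, hgTz, smul_eq_mul] at this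
    linarith
  calc ‖T z‖ / ‖z‖ * F x = g (T x) := by rw [hgTx]; ring
    _ ≤ ‖T x‖ := StrongDual.apply_le_norm_of_norm_le_one hg _

theorem div_norm_le_of_preservesBJAt_segment {T : X →L[ℝ] Y} {z w : X}
    (h0 : (0 : X) ∉ segment ℝ z w) (hT : ∀ p ∈ segment ℝ z w, PreservesBJAt T p) :
    ‖T z‖ / ‖z‖ ≤ ‖T w‖ / ‖w‖ := by
  set γ : ℝ → X := fun t => z + t • (w - z)
  have hγ : ∀ t ∈ Icc (0 : ℝ) 1, γ t ∈ segment ℝ z w := fun t ht => by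
    rw [segment_eq_image']; exact mem_image_of_mem _ ht
  choose F hF hFγ using fun t => exists_dual_vector'' ℝ (γ t)
  have hFγ' : ∀ t s, F t (γ s) = ‖γ t‖ + (s - t) * F t (w - z) := fun t s => by
    have : γ s = γ t + (s - t) • (w - z) := by simp only [γ]; module
    rw [this, map_add, map_smul, hFγ, smul_eq_mul]; rfl
  obtain ⟨t₀, ht₀, hmin⟩ := isCompact_Icc.exists_isMinOn (nonempty_Icc.2 zero_le_one)
    (by fun_prop : Continuous fun t => ‖γ t‖).continuousOn
  have hpos : 0 < ‖γ t₀‖ := norm_pos_iff.2 fun h => h0 (h ▸ hγ t₀ ht₀)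
  simpa [γ] using div_le_div_of_forall_subgradient (m := fun t => ‖γ t‖)
    (h := fun t => ‖T (γ t)‖) (d := fun t => F t (w - z)) zero_le_one hpos
    (fun t ht => hmin ht) (fun t _ => norm_nonneg _)
    (fun t _ s _ => hFγ' t s ▸ StrongDual.apply_le_norm_of_norm_le_one (hF t) (γ s))
    (fun t ht s _ => hFγ' t s ▸ (hT _ (hγ t ht)).div_mul_apply_le (hF t) (hFγ t) (γ s))

theorem div_norm_eq_of_preservesBJAt_segment {T : X →L[ℝ] Y} {z w : X}
    (h0 : (0 : X) ∉ segment ℝ z w) (hT : ∀ p ∈ segment ℝ z w, PreservesBJAt T p) :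
    ‖T z‖ / ‖z‖ = ‖T w‖ / ‖w‖ :=
  (div_norm_le_of_preservesBJAt_segment h0 hT).antisymm <|
    div_norm_le_of_preservesBJAt_segment (segment_symm ℝ z w ▸ h0) (segment_symm ℝ z w ▸ hT)

theorem PreservesBJAt.of_apply_ne_zero {T : X →L[ℝ] Y} {f : StrongDual ℝ X} {c : ℝ}
    (hc : c ≠ 0) (hpres : ∀ x ∈ {x : X | f x = c}, PreservesBJAt T x) {p : X} (hp : f p ≠ 0) :
    PreservesBJAt T p :=
  .of_smul (div_ne_zero hc hp) (hpres _ (by simp [hp]))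

theorem StrongDual.dense_setOf_apply_ne_zero {f : StrongDual ℝ X} (hf : f ≠ 0) :
    Dense {x | f x ≠ 0} := by
  have : interior (LinearMap.ker (f : X →ₗ[ℝ] ℝ) : Set X) = ∅ := by
    by_contra h
    have hker := (LinearMap.ker (f : X →ₗ[ℝ] ℝ)).eq_top_of_nonempty_interior'
      (nonempty_iff_ne_empty.2 h)
    exact hf (ContinuousLinearMap.coe_injective (LinearMap.ker_eq_top.1 hker))
  exact interior_eq_empty_iff_dense_compl.1 this

end

theorem stmt_11_general {X : Type*} [NormedAddCommGroup X] [NormedSpace ℝ X]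
    (T : X →L[ℝ] X)
    (f : StrongDual ℝ X) (hf : f ≠ 0) (c : ℝ) (hc : c ≠ 0)
    (hpres : ∀ x ∈ {x : X | f x = c}, PreservesBJAt T x) :
    ∃ lam : ℝ, 0 ≤ lam ∧ ∀ x : X, ‖T x‖ = lam * ‖x‖ := by
  obtain ⟨v, hv⟩ := DFunLike.ne_iff.1 hf
  obtain ⟨u, hu⟩ : ∃ u, 0 < f u := ⟨(f v)⁻¹ • v, by simp_all⟩
  have hpos : ∀ x, 0 < f x → ‖T x‖ = ‖T u‖ / ‖u‖ * ‖x‖ := fun x hx => by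
    have hseg : segment ℝ u x ⊆ {p | 0 < f p} :=
      (convex_halfSpace_gt f.isLinear 0).segment_subset hu hx
    rw [div_norm_eq_of_preservesBJAt_segment (fun h => (hseg h).ne' (map_zero f))
      fun p hp => .of_apply_ne_zero hc hpres (hseg hp).ne']
    exact (div_mul_cancel₀ _ (norm_ne_zero_iff.2 (by rintro rfl; simp at hx))).symm
  have hne : ∀ x, f x ≠ 0 → ‖T x‖ = ‖T u‖ / ‖u‖ * ‖x‖ := fun x hx =>
    hx.lt_or_gt.elim (fun hneg => by simpa using hpos (-x) (by simpa using hneg)) (hpos x)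
  exact ⟨‖T u‖ / ‖u‖, by positivity, congrFun (Continuous.ext_on
    (StrongDual.dense_setOf_apply_ne_zero hf) (by fun_prop) (by fun_prop) hne)⟩

theorem stmt_11 {X : Type*} [NormedAddCommGroup X] [NormedSpace ℝ X] [CompleteSpace X]
    (T : X →L[ℝ] X)
    (hd : Dense {x : X | SmoothPt x}) (hg : IsGδ {x : X | SmoothPt x})
    (f : StrongDual ℝ X) (hf : f ≠ 0) (c : ℝ) (hc : c ≠ 0)
    (hpres : ∀ x ∈ {x : X | f x = c}, PreservesBJAt T x) :
    ∃ lam : ℝ, 0 ≤ lam ∧ ∀ x : X, ‖T x‖ = lam * ‖x‖ :=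
  stmt_11_general T f hf c hc hpres
end

section
/- Let X, Y be real normed spaces and T : X → Y a bounded linear operator preserving Birkhoff-James orthogonality at u, v ∈ S_X. If u and v lie on the same face F of the unit ball B_X (equivalently there is f ∈ X* with ‖f‖ = 1 and f(u) = f(v) = 1), then ‖Tu‖ = ‖Tv‖. -/
open Metric Filter Set

section BirkhoffJames

variable {X Y : Type*} [NormedAddCommGroup X] [NormedSpace ℝ X]
  [NormedAddCommGroup Y] [NormedSpace ℝ Y]

lemma BJOrth.norm_le_norm_add {u w : X} (h : BJOrth u w) : ‖u‖ ≤ ‖u + w‖ := by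
  simpa using h 1

lemma bjOrth_of_dual_apply_eq_norm {f : StrongDual ℝ X} (hf : ‖f‖ ≤ 1) {u w : X}
    (hfu : f u = ‖u‖) (hfw : f w = 0) : BJOrth u w := by
  intro lam
  calc ‖u‖ = f (u + lam • w) := by simp [hfu, hfw]
    _ ≤ ‖f‖ * ‖u + lam • w‖ := (le_abs_self _).trans (f.le_opNorm _)
    _ ≤ ‖u + lam • w‖ := mul_le_of_le_one_left (norm_nonneg _) hf

lemma norm_apply_le_of_preservesBJAt {T : X →L[ℝ] Y} {u v : X} (hpu : PreservesBJAt T u)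
    {f : StrongDual ℝ X} (hf : ‖f‖ ≤ 1) (hfu : f u = ‖u‖) (hfv : f v = f u) :
    ‖T u‖ ≤ ‖T v‖ := by
  have horth : BJOrth u (v - u) :=
    bjOrth_of_dual_apply_eq_norm hf hfu (by rw [map_sub, hfv, sub_self])
  simpa [map_sub] using (hpu _ horth).norm_le_norm_add

end BirkhoffJames

theorem stmt_14 {X Y : Type*} [NormedAddCommGroup X] [NormedSpace ℝ X]
    [NormedAddCommGroup Y] [NormedSpace ℝ Y] (T : X →L[ℝ] Y) (u v : X)
    (hu : ‖u‖ = 1) (hv : ‖v‖ = 1)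
    (hpu : PreservesBJAt T u) (hpv : PreservesBJAt T v)
    (f : StrongDual ℝ X) (hf : ‖f‖ = 1) (hfu : f u = 1) (hfv : f v = 1) :
    ‖T u‖ = ‖T v‖ :=
  le_antisymm
    (norm_apply_le_of_preservesBJAt hpu hf.le (hfu.trans hu.symm) (hfv.trans hfu.symm))
    (norm_apply_le_of_preservesBJAt hpv hf.le (hfv.trans hv.symm) (hfu.trans hfv.symm))
end

section
/- Let X be a real normed space, x ∈ X nonzero, and V a linear subspace of X. Then V ⊆ x^{⊥_B} (i.e., x ⊥_B v for every v ∈ V) if and only if there exists f ∈ J(x) with V ⊆ ker f. -/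
open Metric Filter Set

theorem BJOrth.of_apply_eq_zero {X : Type*} [NormedAddCommGroup X] [NormedSpace ℝ X]
    {x v : X} {f : StrongDual ℝ X} (hf : ‖f‖ ≤ 1) (hfx : f x = ‖x‖) (hfv : f v = 0) :
    BJOrth x v := fun lam =>
  calc ‖x‖ = f (x + lam • v) := by rw [map_add, map_smul, hfv, smul_zero, add_zero, hfx]
    _ ≤ ‖f‖ * ‖x + lam • v‖ := (le_abs_self _).trans (f.le_opNorm _)
    _ ≤ ‖x + lam • v‖ := mul_le_of_le_one_left (norm_nonneg _) hf

theorem mem_suppFunc_of_norm_le_one {X : Type*} [NormedAddCommGroup X] [NormedSpace ℝ X]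
    {x : X} (hx : x ≠ 0) {f : StrongDual ℝ X} (hf : ‖f‖ ≤ 1) (hfx : f x = ‖x‖) :
    f ∈ SuppFunc x := by
  refine ⟨le_antisymm hf ?_, hfx⟩
  have hle : ‖x‖ ≤ ‖f‖ * ‖x‖ := by simpa [hfx] using f.le_opNorm x
  exact le_of_mul_le_mul_right (by simpa using hle) (norm_pos_iff.mpr hx)

theorem AddSubgroup.norm_mk_eq_norm {M : Type*} [SeminormedAddCommGroup M] {S : AddSubgroup M}
    {x : M} (h : ∀ s ∈ S, ‖x‖ ≤ ‖x + s‖) : ‖(x : M ⧸ S)‖ = ‖x‖ := by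
  refine le_antisymm QuotientAddGroup.norm_mk_le_norm ?_
  rw [← QuotientAddGroup.mk'_apply, quotient_norm_mk_eq]
  exact le_csInf ⟨‖x + 0‖, Set.mem_image_of_mem _ S.zero_mem⟩
    (by rintro _ ⟨s, hs, rfl⟩; exact h s hs)

/-- Hahn–Banach applied in `X ⧸ V`, where `x` keeps its norm. -/
theorem exists_dual_vector_vanishing_on {X : Type*} [SeminormedAddCommGroup X] [NormedSpace ℝ X]
    {x : X} {V : Submodule ℝ X} (h : ∀ v ∈ V, ‖x‖ ≤ ‖x + v‖) :
    ∃ f : StrongDual ℝ X, ‖f‖ ≤ 1 ∧ f x = ‖x‖ ∧ ∀ v ∈ V, f v = 0 := by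
  have hnorm : ‖Submodule.Quotient.mk (p := V) x‖ = ‖x‖ :=
    AddSubgroup.norm_mk_eq_norm (S := V.toAddSubgroup) h
  obtain ⟨g, hg, hgx⟩ := exists_dual_vector'' ℝ (V.mkQ x)
  refine ⟨g.comp V.mkQL, ?_, by simpa [hnorm] using hgx, fun v hv => ?_⟩
  · refine ContinuousLinearMap.opNorm_le_bound _ zero_le_one fun y => ?_
    calc ‖g (V.mkQ y)‖ ≤ ‖g‖ * ‖V.mkQ y‖ := g.le_opNorm _
      _ ≤ 1 * ‖y‖ := mul_le_mul hg (Submodule.Quotient.norm_mk_le V y) (norm_nonneg _) zero_le_one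
  · simp [(Submodule.Quotient.mk_eq_zero V).mpr hv]

theorem stmt_15 {X : Type*} [NormedAddCommGroup X] [NormedSpace ℝ X]
    (x : X) (hx : x ≠ 0) (V : Submodule ℝ X) :
    (∀ v ∈ V, BJOrth x v) ↔ ∃ f ∈ SuppFunc x, ∀ v ∈ V, f v = 0 := by
  constructor
  · intro h
    obtain ⟨f, hf, hfx, hfV⟩ :=
      exists_dual_vector_vanishing_on (V := V) fun v hv => by simpa using h v hv 1
    exact ⟨f, mem_suppFunc_of_norm_le_one hx hf hfx, hfV⟩
  · rintro ⟨f, ⟨hf, hfx⟩, hfV⟩ v hv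
    exact BJOrth.of_apply_eq_zero hf.le hfx (hfV v hv)
end

section
/- Let X, Y be real normed spaces, F a face of the unit ball B_X supported by a norm-one functional f, and A ⊆ F. If a bounded linear operator T : X → Y preserves Birkhoff-James orthogonality at each point of A, then T preserves Birkhoff-James orthogonality at each point of the convex hull co(A). -/
open Metric Filter Set

/-
If `x ∈ co(A)` and `x ⊥_B v`, James' characterization gives a norm-one functional `g` with
`g x = 1` and `g v = 0`. Since `co(A)` lies in the face of `f`, all points of `A` have norm one,
so `g`, which attains its norm at the convex combination `x`, also attains it at every point `a`
entering `x`; hence `a ⊥_B (x - a + λ v)`, and preservation at `a` gives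
`‖T a‖ ≤ ‖T x + λ T v‖`. Averaging these bounds yields `‖T x‖ ≤ ‖T x + λ T v‖`.
-/

section BirkhoffJames

variable {X : Type*} [NormedAddCommGroup X] [NormedSpace ℝ X]

lemma apply_le_norm_of_opNorm_le_one {g : StrongDual ℝ X} (hg : ‖g‖ ≤ 1) (x : X) :
    g x ≤ ‖x‖ :=
  (le_abs_self _).trans ((g.le_opNorm x).trans (mul_le_of_le_one_left (norm_nonneg x) hg))

lemma bjOrth_of_dual {u v : X} {g : StrongDual ℝ X} (hg : ‖g‖ ≤ 1) (hgu : g u = ‖u‖)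
    (hgv : g v = 0) : BJOrth u v := fun lam =>
  calc ‖u‖ = g (u + lam • v) := by simp [hgu, hgv]
    _ ≤ ‖u + lam • v‖ := apply_le_norm_of_opNorm_le_one hg _

-- The quotient norm of `u` modulo `ℝ ∙ v` is `‖u‖`; a norming functional for it lifts to `X`.
lemma exists_dual_of_bjOrth {u v : X} (h : BJOrth u v) :
    ∃ g : StrongDual ℝ X, ‖g‖ ≤ 1 ∧ g u = ‖u‖ ∧ g v = 0 := by
  set K := ℝ ∙ v
  have hnorm : ‖(Submodule.Quotient.mk u : X ⧸ K)‖ = ‖u‖ := by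
    refine le_antisymm (QuotientAddGroup.norm_mk_le_norm) (QuotientAddGroup.le_norm_iff.2 ?_)
    intro m hm
    obtain ⟨c, hc⟩ := Submodule.mem_span_singleton.1 ((Submodule.Quotient.eq K).1 hm)
    simpa [hc] using h c
  obtain ⟨G, hG, hGu⟩ := exists_dual_vector'' ℝ (Submodule.Quotient.mk u : X ⧸ K)
  refine ⟨G.comp K.mkQL, ?_, by simpa [hnorm] using hGu, ?_⟩
  · refine G.comp K.mkQL |>.opNorm_le_bound zero_le_one fun y => ?_
    calc ‖G (K.mkQL y)‖ ≤ 1 * ‖K.mkQL y‖ := G.le_of_opNorm_le hG _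
      _ ≤ 1 * ‖y‖ := by gcongr; exact QuotientAddGroup.norm_mk_le_norm
  · simp [(Submodule.Quotient.mk_eq_zero K).2 (Submodule.mem_span_singleton_self v)]

lemma convex_face {f : StrongDual ℝ X} (hf : ‖f‖ ≤ 1) :
    Convex ℝ {x : X | ‖x‖ = 1 ∧ f x = 1} := by
  have hface : {x : X | ‖x‖ = 1 ∧ f x = 1} = closedBall 0 1 ∩ {x | f x = 1} := by
    ext x
    simp only [mem_ofPred_eq, mem_inter_iff, mem_closedBall, dist_zero_right]
    refine ⟨fun h => ⟨h.1.le, h.2⟩, fun h => ⟨?_, h.2⟩⟩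
    linarith [h.1, h.2, apply_le_norm_of_opNorm_le_one hf x]
  rw [hface]
  exact (convex_closedBall 0 1).inter (convex_hyperplane f.isLinear 1)

end BirkhoffJames

section PreservesBJ

variable {X Y : Type*} [NormedAddCommGroup X] [NormedSpace ℝ X]
  [NormedAddCommGroup Y] [NormedSpace ℝ Y] {T : X →L[ℝ] Y}

-- `p ⊥_B (y - p)`, witnessed by `g`.
lemma PreservesBJAt.norm_apply_le {p y : X} (hp : PreservesBJAt T p) {g : StrongDual ℝ X}
    (hg : ‖g‖ ≤ 1) (hgp : g p = ‖p‖) (hy : g y = g p) : ‖T p‖ ≤ ‖T y‖ := by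
  simpa using hp (y - p) (bjOrth_of_dual hg hgp (by simp [hy])) 1

lemma preservesBJAt_of_mem_openSegment {a b x : X} (ha : PreservesBJAt T a)
    (hb : PreservesBJAt T b) (hx : x ∈ openSegment ℝ a b) (hax : ‖a‖ = ‖x‖)
    (hbx : ‖b‖ = ‖x‖) : PreservesBJAt T x := by
  obtain ⟨t, s, ht, hs, hts, rfl⟩ := hx
  intro v hv lam
  obtain ⟨g, hg, hgx, hgv⟩ := exists_dual_of_bjOrth hv
  set x := t • a + s • b
  -- `g` supports both endpoints, since it supports the interior point `x`.
  have hga_le : g a ≤ ‖x‖ := hax ▸ apply_le_norm_of_opNorm_le_one hg a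
  have hgb_le : g b ≤ ‖x‖ := hbx ▸ apply_le_norm_of_opNorm_le_one hg b
  have hsum : t * (‖x‖ - g a) + s * (‖x‖ - g b) = 0 := by
    have : t * g a + s * g b = ‖x‖ := by simpa [x] using hgx
    linear_combination ‖x‖ * hts - this
  obtain ⟨hta, hsb⟩ := (add_eq_zero_iff_of_nonneg (mul_nonneg ht.le (sub_nonneg.2 hga_le))
    (mul_nonneg hs.le (sub_nonneg.2 hgb_le))).1 hsum
  have hga : g a = ‖a‖ := by linarith [(mul_eq_zero.1 hta).resolve_left ht.ne']
  have hgb : g b = ‖b‖ := by linarith [(mul_eq_zero.1 hsb).resolve_left hs.ne']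
  have hgy : g (x + lam • v) = ‖x‖ := by simp [hgx, hgv]
  have hTa := ha.norm_apply_le hg hga (y := x + lam • v) (by rw [hgy, hga, hax])
  have hTb := hb.norm_apply_le hg hgb (y := x + lam • v) (by rw [hgy, hgb, hbx])
  calc ‖T x‖ ≤ t * ‖T a‖ + s * ‖T b‖ := by
        simpa [x, norm_smul, abs_of_pos ht, abs_of_pos hs] using norm_add_le (t • T a) (s • T b)
    _ ≤ t * ‖T (x + lam • v)‖ + s * ‖T (x + lam • v)‖ := by gcongr
    _ = ‖T x + lam • T v‖ := by rw [← add_mul, hts, one_mul, map_add, map_smul]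

end PreservesBJ

theorem stmt_16 {X Y : Type*} [NormedAddCommGroup X] [NormedSpace ℝ X]
    [NormedAddCommGroup Y] [NormedSpace ℝ Y] (T : X →L[ℝ] Y)
    (f : StrongDual ℝ X) (hf : ‖f‖ = 1)
    (A : Set X) (hA : A ⊆ {x : X | ‖x‖ = 1 ∧ f x = 1})
    (hpres : ∀ x ∈ A, PreservesBJAt T x) :
    ∀ x ∈ convexHull ℝ A, PreservesBJAt T x := by
  set S : Set X := {x | (‖x‖ = 1 ∧ f x = 1) ∧ PreservesBJAt T x}
  have hS : Convex ℝ S := convex_iff_openSegment_subset.2 fun a ha b hb x hx => by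
    have hxF := (convex_face hf.le).openSegment_subset ha.1 hb.1 hx
    exact ⟨hxF, preservesBJAt_of_mem_openSegment ha.2 hb.2 hx (ha.1.1.trans hxF.1.symm)
      (hb.1.1.trans hxF.1.symm)⟩
  have hAS : A ⊆ S := fun a ha => ⟨hA ha, hpres a ha⟩
  exact fun x hx => (convexHull_min hAS hS hx).2
end
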